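/- Fix x ∈ ℝ, and let F_n(x) = Φ(h_n)^{n} − (1 − Φ(h_n))^{n} where h_n = (c_n x + d_n)^{1/2}, with c_n = 2 − 2b_n^{−2} and d_n = b_n² − 2b_n^{−2}, defined for n large enough that c_n x + d_n > 0. Then lim_{n→∞} b_n⁴ ( F_n(x) − Λ(x) ) = −Λ(x) e^{−x} ( 7/2 + 3x + x² ). -/

import Mathlib

/-!
Put `β = b_n²` and `t = β⁻¹`. Then `n = √(2πβ) e^{β/2}` and `h_n² = β P(t)` with
`P(t) = 1 + 2xt - (2x+2)t²`, so that `n φ(h_n) / h_n = e^{-x} e^{(x+1)t} P(t)^{-1/2}`.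
Three integrations by parts give the Mills ratio expansion
`h (1 - Φ(h)) / φ(h) = 1 - h⁻² + 3h⁻⁴ + O(h⁻⁶)`, and `h_n⁻² = t / P(t)`; hence
`e^x n (1 - Φ(h_n))` is, up to `O(t³)`, an explicit smooth function of `t` whose second-order
Taylor expansion at `0` is `1 + (x² + 3x + 7/2) t²`. With `S_n = 1 - Φ(h_n)` this says
`β² (n S_n - e^{-x}) → e^{-x} (x² + 3x + 7/2)`. Finally `Φ(h_n)^n = exp (n log (1 - S_n))`,
where `n log (1 - S_n) = -n S_n + O(n S_n²)` and `β² / n → 0`, while `S_n^n` is negligible.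
-/

open Real Filter Topology

/-- The standard normal distribution function. -/
noncomputable def stdNormalCDF (x : ℝ) : ℝ :=
  ∫ u in Set.Iic x, Real.exp (-u ^ 2 / 2) / Real.sqrt (2 * Real.pi)

/-- The Gumbel distribution function `Λ(x) = exp(−e^{−x})`. -/
noncomputable def gumbel (x : ℝ) : ℝ := Real.exp (-Real.exp (-x))

/-- Second-order Taylor expansion in Peano form:
`f x = a + b (x - x₀) + c (x - x₀)² + o((x - x₀)²)`. -/
def HasQuadraticExpansionAt (f : ℝ → ℝ) (x₀ a b c : ℝ) : Prop :=
  ∃ R : ℝ → ℝ, Tendsto R (𝓝 x₀) (𝓝 c) ∧ ∀ x, f x = a + b * (x - x₀) + (x - x₀) ^ 2 * R x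

namespace HasQuadraticExpansionAt

variable {f g : ℝ → ℝ} {x₀ a b c a' b' c' : ℝ}

theorem tendsto (hf : HasQuadraticExpansionAt f x₀ a b c) : Tendsto f (𝓝 x₀) (𝓝 a) := by
  obtain ⟨R, hR, hf⟩ := hf
  have hs : Tendsto (fun x => x - x₀) (𝓝 x₀) (𝓝 0) := tendsto_sub_nhds_zero_iff.2 tendsto_id
  simpa [funext hf] using
    ((tendsto_const_nhds (x := a)).add (hs.const_mul b)).add ((hs.pow 2).mul hR)

theorem tendsto_div_sq (hf : HasQuadraticExpansionAt f x₀ a b c) :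
    Tendsto (fun x => (f x - a - b * (x - x₀)) / (x - x₀) ^ 2) (𝓝[≠] x₀) (𝓝 c) := by
  obtain ⟨R, hR, hf⟩ := hf
  refine (hR.mono_left nhdsWithin_le_nhds).congr' ?_
  filter_upwards [self_mem_nhdsWithin] with x hx
  have : x - x₀ ≠ 0 := sub_ne_zero.2 hx
  rw [hf]
  field_simp
  ring

theorem of_hasDerivAt {f' : ℝ → ℝ} {L : ℝ} (hf : ∀ᶠ x in 𝓝 x₀, HasDerivAt f (f' x) x)
    (hf' : HasDerivAt f' L x₀) : HasQuadraticExpansionAt f x₀ (f x₀) (f' x₀) (L / 2) := by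
  classical
  set R := Function.update (fun x => (f x - f x₀ - f' x₀ * (x - x₀)) / (x - x₀) ^ 2) x₀ (L / 2)
  refine ⟨R, ?_, fun x => ?_⟩
  · have hR : ContinuousAt R x₀ := by
      refine continuousAt_update_same.2 <| HasDerivAt.lhopital_zero_nhdsNE
        (f' := fun x => f' x - f' x₀) (g' := fun x => 2 * (x - x₀)) ?_ ?_ ?_ ?_ ?_ ?_
      · filter_upwards [hf.filter_mono nhdsWithin_le_nhds] with x hx
        exact ((hx.sub_const _).sub (((hasDerivAt_id' x).sub_const x₀).const_mul _)).congr_deriv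
          (by ring)
      · filter_upwards with x
        exact (((hasDerivAt_id' x).sub_const x₀).pow 2).congr_deriv (by norm_num)
      · filter_upwards [self_mem_nhdsWithin] with x hx
        exact mul_ne_zero two_ne_zero (sub_ne_zero.2 hx)
      · have hc : ContinuousAt f x₀ := hf.self_of_nhds.continuousAt
        have : ContinuousAt (fun x => f x - f x₀ - f' x₀ * (x - x₀)) x₀ := by fun_prop
        simpa using this.tendsto.mono_left nhdsWithin_le_nhds
      · have : ContinuousAt (fun x => (x - x₀) ^ 2) x₀ := by fun_prop
        simpa using this.tendsto.mono_left nhdsWithin_le_nhds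
      · refine ((hasDerivAt_iff_tendsto_slope.1 hf').div_const 2).congr' ?_
        filter_upwards [self_mem_nhdsWithin] with x hx
        have : x - x₀ ≠ 0 := sub_ne_zero.2 hx
        rw [slope_def_field]
        field_simp
    simpa [R] using hR.tendsto
  · by_cases hx : x = x₀
    · simp [hx]
    · have : x - x₀ ≠ 0 := sub_ne_zero.2 hx
      simp only [R, Function.update_of_ne hx]
      field_simp
      ring

theorem mul (hf : HasQuadraticExpansionAt f x₀ a b c) (hg : HasQuadraticExpansionAt g x₀ a' b' c') :
    HasQuadraticExpansionAt (fun x => f x * g x) x₀ (a * a') (a * b' + b * a')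
      (a * c' + b * b' + c * a') := by
  obtain ⟨F, hF, hf⟩ := hf
  obtain ⟨G, hG, hg⟩ := hg
  have hs : Tendsto (fun x => x - x₀) (𝓝 x₀) (𝓝 0) := tendsto_sub_nhds_zero_iff.2 tendsto_id
  refine ⟨fun x => a * G x + b * b' + F x * a' + (x - x₀) * (b * G x + F x * b')
    + (x - x₀) ^ 2 * (F x * G x), ?_, fun x => by dsimp only; rw [hf, hg]; ring⟩
  simpa using (((hG.const_mul a).add_const (b * b')).add (hF.mul_const a')).add
    (hs.mul ((hG.const_mul b).add (hF.mul_const b'))) |>.add ((hs.pow 2).mul (hF.mul hG))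

theorem comp {φ : ℝ → ℝ} {A p q : ℝ} (hφ : HasQuadraticExpansionAt φ a A p q)
    (hf : HasQuadraticExpansionAt f x₀ a b c) :
    HasQuadraticExpansionAt (fun x => φ (f x)) x₀ A (p * b) (p * c + b ^ 2 * q) := by
  have hfa := hf.tendsto
  obtain ⟨Φ, hΦ, hφ⟩ := hφ
  obtain ⟨F, hF, hf⟩ := hf
  have hs : Tendsto (fun x => x - x₀) (𝓝 x₀) (𝓝 0) := tendsto_sub_nhds_zero_iff.2 tendsto_id
  refine ⟨fun x => p * F x + (b + (x - x₀) * F x) ^ 2 * Φ (f x), ?_, fun x => ?_⟩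
  · simpa using (hF.const_mul p).add
      (((tendsto_const_nhds (x := b)).add (hs.mul hF)).pow 2 |>.mul (hΦ.comp hfa))
  · dsimp only
    rw [hφ (f x), hf x]
    ring

end HasQuadraticExpansionAt

theorem hasQuadraticExpansionAt_exp (x₀ : ℝ) :
    HasQuadraticExpansionAt exp x₀ (exp x₀) (exp x₀) (exp x₀ / 2) :=
  .of_hasDerivAt (.of_forall hasDerivAt_exp) (hasDerivAt_exp x₀)

theorem hasQuadraticExpansionAt_rpow {y₀ : ℝ} (hy₀ : 0 < y₀) (r : ℝ) :
    HasQuadraticExpansionAt (fun y => y ^ r) y₀ (y₀ ^ r) (r * y₀ ^ (r - 1))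
      (r * (r - 1) * y₀ ^ (r - 2) / 2) := by
  have hd : ∀ᶠ y in 𝓝 y₀, HasDerivAt (fun y => y ^ r) (r * y ^ (r - 1)) y :=
    (lt_mem_nhds hy₀).mono fun y hy => hasDerivAt_rpow_const (Or.inl hy.ne')
  convert HasQuadraticExpansionAt.of_hasDerivAt hd
    ((hasDerivAt_rpow_const (Or.inl hy₀.ne')).const_mul r) using 2
  ring_nf

/-- The first three terms of the asymptotic series of `h (1 - Φ h) / φ h` in `w = h⁻²`. -/
def millsPoly (w : ℝ) : ℝ := 1 - w + 3 * w ^ 2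

section MillsRatio

open MeasureTheory Set

noncomputable def millsRatio (h : ℝ) : ℝ := exp (h ^ 2 / 2) * ∫ u in Ioi h, exp (-u ^ 2 / 2)

lemma integrable_exp_neg_sq_div_two : Integrable fun u : ℝ => exp (-u ^ 2 / 2) := by
  convert integrable_exp_neg_mul_sq (b := 1 / 2) (by norm_num) using 3
  ring_nf

lemma integral_exp_neg_sq_div_two : ∫ u : ℝ, exp (-u ^ 2 / 2) = √(2 * π) := by
  convert integral_gaussian (1 / 2) using 3 <;> ring_nf

lemma one_sub_stdNormalCDF (h : ℝ) :
    1 - stdNormalCDF h = exp (-h ^ 2 / 2) * millsRatio h / √(2 * π) := by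
  have hsplit := integral_add_compl (measurableSet_Iic (a := h)) integrable_exp_neg_sq_div_two
  rw [compl_Iic, integral_exp_neg_sq_div_two] at hsplit
  have : √(2 * π) ≠ 0 := by positivity
  rw [stdNormalCDF, integral_div, millsRatio, ← mul_assoc, ← exp_add,
    show -h ^ 2 / 2 + h ^ 2 / 2 = 0 by ring, exp_zero, one_mul, eq_div_iff this, sub_mul,
    div_mul_cancel₀ _ this, one_mul]
  linarith

lemma tendsto_exp_neg_sq_div_two : Tendsto (fun u : ℝ => exp (-u ^ 2 / 2)) atTop (𝓝 0) := by
  refine tendsto_exp_atBot.comp ?_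
  simpa [neg_div] using (tendsto_pow_atTop two_ne_zero).atTop_div_const (two_pos : (0 : ℝ) < 2)

lemma hasDerivAt_exp_neg_sq_div_two (u : ℝ) :
    HasDerivAt (fun u : ℝ => exp (-u ^ 2 / 2)) (-(u * exp (-u ^ 2 / 2))) u := by
  convert ((hasDerivAt_pow 2 u).div_const 2).fun_neg.exp using 1
  · simp only [neg_div]
  · ring_nf

lemma integral_Ioi_mul_exp_neg_sq_div_two (h : ℝ) :
    ∫ u in Ioi h, u * exp (-u ^ 2 / 2) = exp (-h ^ 2 / 2) := by
  have := integral_Ioi_of_hasDerivAt_of_tendsto (a := h)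
    (f := fun u => -exp (-u ^ 2 / 2)) (by fun_prop)
    (fun u _ => (hasDerivAt_exp_neg_sq_div_two u).fun_neg)
    ((integrable_mul_exp_neg_mul_sq (b := 1 / 2) (by norm_num)).integrableOn.congr_fun
      (fun u _ => by ring_nf) measurableSet_Ioi)
    tendsto_exp_neg_sq_div_two.neg
  simpa using this

lemma integrableOn_exp_neg_sq_div_two_mul_inv_pow {h : ℝ} (hh : 0 < h) (k : ℕ) :
    IntegrableOn (fun u : ℝ => exp (-u ^ 2 / 2) * u⁻¹ ^ k) (Ioi h) := by
  refine (integrable_exp_neg_sq_div_two.integrableOn.mul_const (h⁻¹ ^ k)).mono'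
    (by fun_prop : Measurable fun u : ℝ => exp (-u ^ 2 / 2) * u⁻¹ ^ k).aestronglyMeasurable ?_
  refine (ae_restrict_iff' measurableSet_Ioi).2 (.of_forall fun u (hu : h < u) => ?_)
  have := hh.trans hu
  rw [norm_of_nonneg (by positivity)]
  gcongr

lemma integral_Ioi_exp_neg_sq_div_two_mul_one_add {h : ℝ} (hh : 0 < h) :
    ∫ u in Ioi h, exp (-u ^ 2 / 2) * (1 + 15 * u⁻¹ ^ 6) =
      exp (-h ^ 2 / 2) * (h⁻¹ - h⁻¹ ^ 3 + 3 * h⁻¹ ^ 5) := by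
  set q : ℝ → ℝ := fun v => v - v ^ 3 + 3 * v ^ 5
  have hderiv : ∀ u : ℝ, 0 < u → HasDerivAt (fun u => -(exp (-u ^ 2 / 2) * q u⁻¹))
      (exp (-u ^ 2 / 2) * (1 + 15 * u⁻¹ ^ 6)) u := by
    intro u hu
    have hq : HasDerivAt q (1 - 3 * u⁻¹ ^ 2 + 15 * u⁻¹ ^ 4) u⁻¹ :=
      (((hasDerivAt_id' _).fun_sub (hasDerivAt_pow 3 _)).fun_add
        ((hasDerivAt_pow 5 _).const_mul 3)).congr_deriv (by ring)
    refine (((hasDerivAt_exp_neg_sq_div_two u).fun_mul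
      (hq.comp u (hasDerivAt_inv hu.ne'))).fun_neg).congr_deriv ?_
    simp only [Function.comp_apply, q]
    field_simp
    ring
  have hlim : Tendsto (fun u : ℝ => -(exp (-u ^ 2 / 2) * q u⁻¹)) atTop (𝓝 0) := by
    have hq : Tendsto (fun u : ℝ => q u⁻¹) atTop (𝓝 (q 0)) :=
      ((by fun_prop : Continuous q).tendsto 0).comp tendsto_inv_atTop_zero
    simpa [q] using (tendsto_exp_neg_sq_div_two.mul hq).neg
  have hint : IntegrableOn (fun u : ℝ => exp (-u ^ 2 / 2) * (1 + 15 * u⁻¹ ^ 6)) (Ioi h) :=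
    (integrable_exp_neg_sq_div_two.integrableOn.add
      ((integrableOn_exp_neg_sq_div_two_mul_inv_pow hh 6).const_mul 15)).congr_fun
      (fun u _ => by simp only [Pi.add_apply]; ring) measurableSet_Ioi
  rw [integral_Ioi_of_hasDerivAt_of_tendsto (hderiv h hh).continuousAt.continuousWithinAt
    (fun u hu => hderiv u (hh.trans hu)) hint hlim]
  ring

lemma integral_Ioi_exp_neg_sq_div_two_mul_inv_pow_six_le {h : ℝ} (hh : 0 < h) :
    ∫ u in Ioi h, exp (-u ^ 2 / 2) * u⁻¹ ^ 6 ≤ exp (-h ^ 2 / 2) * h⁻¹ ^ 7 := by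
  calc ∫ u in Ioi h, exp (-u ^ 2 / 2) * u⁻¹ ^ 6
      ≤ ∫ u in Ioi h, u * exp (-u ^ 2 / 2) * h⁻¹ ^ 7 := by
        refine setIntegral_mono_on (integrableOn_exp_neg_sq_div_two_mul_inv_pow hh 6)
          (((integrable_mul_exp_neg_mul_sq (b := 1 / 2) (by norm_num)).integrableOn.congr_fun
            (fun u _ => by ring_nf) measurableSet_Ioi).mul_const _) measurableSet_Ioi
          fun u (hu : h < u) => ?_
        have hu0 := hh.trans hu
        calc exp (-u ^ 2 / 2) * u⁻¹ ^ 6 = u * exp (-u ^ 2 / 2) * u⁻¹ ^ 7 := by field_simp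
          _ ≤ u * exp (-u ^ 2 / 2) * h⁻¹ ^ 7 := by gcongr
    _ = exp (-h ^ 2 / 2) * h⁻¹ ^ 7 := by
        rw [integral_mul_const, integral_Ioi_mul_exp_neg_sq_div_two]

theorem abs_mul_millsRatio_sub_millsPoly_le {h : ℝ} (hh : 0 < h) :
    |h * millsRatio h - millsPoly (h ^ 2)⁻¹| ≤ 15 * ((h ^ 2)⁻¹) ^ 3 := by
  set J := ∫ u in Ioi h, exp (-u ^ 2 / 2) * u⁻¹ ^ 6
  have hT : (∫ u in Ioi h, exp (-u ^ 2 / 2)) + 15 * J =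
      exp (-h ^ 2 / 2) * (h⁻¹ - h⁻¹ ^ 3 + 3 * h⁻¹ ^ 5) := by
    rw [← integral_Ioi_exp_neg_sq_div_two_mul_one_add hh, ← integral_const_mul,
      ← integral_add integrable_exp_neg_sq_div_two.integrableOn
        ((integrableOn_exp_neg_sq_div_two_mul_inv_pow hh 6).const_mul 15)]
    congr 1 with u
    ring
  have hJ0 : 0 ≤ J := setIntegral_nonneg measurableSet_Ioi fun u _ => by positivity
  have he : exp (h ^ 2 / 2) * exp (-h ^ 2 / 2) = 1 := by
    rw [← exp_add, neg_div, add_neg_cancel, exp_zero]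
  have hK : h * exp (h ^ 2 / 2) * J ≤ ((h ^ 2)⁻¹) ^ 3 := by
    calc h * exp (h ^ 2 / 2) * J ≤ h * exp (h ^ 2 / 2) * (exp (-h ^ 2 / 2) * h⁻¹ ^ 7) := by
          gcongr
          exact integral_Ioi_exp_neg_sq_div_two_mul_inv_pow_six_le hh
      _ = ((h ^ 2)⁻¹) ^ 3 := by
          rw [show h * exp (h ^ 2 / 2) * (exp (-h ^ 2 / 2) * h⁻¹ ^ 7) =
            exp (h ^ 2 / 2) * exp (-h ^ 2 / 2) * (h * h⁻¹ ^ 7) by ring, he]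
          field_simp
  have heq : h * millsRatio h - millsPoly (h ^ 2)⁻¹ = -(15 * (h * exp (h ^ 2 / 2) * J)) := by
    rw [millsRatio, millsPoly, eq_sub_of_add_eq hT]
    linear_combination (h * (h⁻¹ - h⁻¹ ^ 3 + 3 * h⁻¹ ^ 5)) * he +
      (1 - (h ^ 2)⁻¹ + 3 * ((h ^ 2)⁻¹) ^ 2) * mul_inv_cancel₀ hh.ne'
  rw [heq, abs_neg, abs_of_nonneg (by positivity)]
  linarith

end MillsRatio

def levelSqFactor (x t : ℝ) : ℝ := 1 + 2 * x * t - (2 * x + 2) * t ^ 2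

/-- `h_n = hallLevel x (b_n²)`. -/
noncomputable def hallLevel (x β : ℝ) : ℝ := √(β + 2 * x - (2 * x + 2) / β)

lemma hallLevel_eq_sqrt_mul {x β : ℝ} (hβ : 0 < β) :
    hallLevel x β = √(β * levelSqFactor x β⁻¹) := by
  rw [hallLevel, levelSqFactor]
  congr 1
  field_simp

lemma hallLevel_sq {x β : ℝ} (hβ : 0 < β) (hP : 0 < levelSqFactor x β⁻¹) :
    hallLevel x β ^ 2 = β * levelSqFactor x β⁻¹ := by
  rw [hallLevel_eq_sqrt_mul hβ, sq_sqrt (by positivity)]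

lemma hallLevel_pos {x β : ℝ} (hβ : 0 < β) (hP : 0 < levelSqFactor x β⁻¹) :
    0 < hallLevel x β := by
  rw [hallLevel_eq_sqrt_mul hβ]
  positivity

theorem hasQuadraticExpansionAt_exp_mul_rpow_mul_millsPoly (x : ℝ) :
    HasQuadraticExpansionAt (fun t => exp ((x + 1) * t) *
      (levelSqFactor x t ^ (-(1 / 2) : ℝ) * millsPoly (t * (levelSqFactor x t)⁻¹)))
      0 1 0 (x ^ 2 + 3 * x + 7 / 2) := by
  have hP : HasQuadraticExpansionAt (levelSqFactor x) 0 1 (2 * x) (-(2 * x + 2)) :=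
    ⟨fun _ => _, tendsto_const_nhds, fun t => by rw [levelSqFactor]; ring⟩
  have hlin : HasQuadraticExpansionAt (fun t => (x + 1) * t) 0 0 (x + 1) 0 :=
    ⟨fun _ => 0, tendsto_const_nhds, fun t => by ring⟩
  have hid : HasQuadraticExpansionAt (fun t => t) 0 0 1 0 :=
    ⟨fun _ => 0, tendsto_const_nhds, fun t => by ring⟩
  have hm : HasQuadraticExpansionAt millsPoly 0 1 (-1) 3 :=
    ⟨fun _ => 3, tendsto_const_nhds, fun w => by rw [millsPoly]; ring⟩
  have hG := (hasQuadraticExpansionAt_rpow one_pos (-(1 / 2))).comp hP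
  have hV := (hasQuadraticExpansionAt_rpow one_pos (-1)).comp hP
  simp only [Real.rpow_neg_one, Real.one_rpow] at hV
  have hw : HasQuadraticExpansionAt (fun t => t * (levelSqFactor x t)⁻¹) 0 0 1 (-(2 * x)) := by
    convert hid.mul hV using 1 <;> norm_num
  have := ((hasQuadraticExpansionAt_exp 0).comp hlin).mul (hG.mul (hm.comp hw))
  convert this using 1 <;> norm_num <;> ring

lemma sqrt_mul_exp_mul_one_sub_stdNormalCDF_hallLevel {x β : ℝ} (hβ : 0 < β)
    (hP : 0 < levelSqFactor x β⁻¹) :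
    √(2 * π * β) * exp (β / 2) * (1 - stdNormalCDF (hallLevel x β)) =
      exp (-x) * exp ((x + 1) * β⁻¹) * levelSqFactor x β⁻¹ ^ (-(1 / 2) : ℝ) *
        (hallLevel x β * millsRatio (hallLevel x β)) := by
  have hexp : exp (β / 2) * exp (-hallLevel x β ^ 2 / 2) = exp (-x) * exp ((x + 1) * β⁻¹) := by
    rw [← exp_add, ← exp_add, hallLevel_sq hβ hP, levelSqFactor]
    congr 1
    field_simp
    ring
  rw [one_sub_stdNormalCDF, rpow_neg hP.le, ← sqrt_eq_rpow, sqrt_mul (by positivity), ← hexp]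
  generalize millsRatio (hallLevel x β) = M
  rw [hallLevel_eq_sqrt_mul hβ, sqrt_mul hβ.le]
  have : 0 < √(levelSqFactor x β⁻¹) := sqrt_pos.2 hP
  generalize √(levelSqFactor x β⁻¹) = s at this
  field_simp

lemma eventually_pos_levelSqFactor_inv (x : ℝ) :
    ∀ᶠ β : ℝ in atTop, 0 < β ∧ 0 < levelSqFactor x β⁻¹ := by
  have hP : Continuous (levelSqFactor x) := by unfold levelSqFactor; fun_prop
  refine (eventually_gt_atTop 0).and <|
    (tendsto_inv_atTop_nhdsGT_zero.mono_right nhdsWithin_le_nhds).eventually <|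
      (hP.tendsto 0).eventually (lt_mem_nhds ?_)
  simp [levelSqFactor]

lemma tendsto_sq_mul_exp_mul_rpow_mul_millsPoly_sub_one (x : ℝ) :
    Tendsto (fun β : ℝ => β ^ 2 * (exp ((x + 1) * β⁻¹) *
      (levelSqFactor x β⁻¹ ^ (-(1 / 2) : ℝ) * millsPoly (β⁻¹ * (levelSqFactor x β⁻¹)⁻¹)) - 1))
      atTop (𝓝 (x ^ 2 + 3 * x + 7 / 2)) := by
  refine ((hasQuadraticExpansionAt_exp_mul_rpow_mul_millsPoly x).tendsto_div_sq.comp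
    (tendsto_inv_atTop_nhdsGT_zero.mono_right
      (nhdsWithin_mono _ fun t ht => ne_of_gt ht))).congr fun β => ?_
  simp [div_eq_mul_inv, mul_comm]

lemma tendsto_sq_mul_exp_mul_rpow_mul_millsRemainder (x : ℝ) :
    Tendsto (fun β : ℝ => β ^ 2 * (exp ((x + 1) * β⁻¹) * levelSqFactor x β⁻¹ ^ (-(1 / 2) : ℝ) *
      (hallLevel x β * millsRatio (hallLevel x β) -
        millsPoly (β⁻¹ * (levelSqFactor x β⁻¹)⁻¹)))) atTop (𝓝 0) := by
  have hbound : Tendsto (fun t => 15 * (exp ((x + 1) * t) * levelSqFactor x t ^ (-(1 / 2) : ℝ) *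
      (t * ((levelSqFactor x t)⁻¹) ^ 3))) (𝓝 0) (𝓝 0) := by
    have : ContinuousAt (levelSqFactor x) 0 := by unfold levelSqFactor; fun_prop
    have : ContinuousAt (fun t => 15 * (exp ((x + 1) * t) * levelSqFactor x t ^ (-(1 / 2) : ℝ) *
        (t * ((levelSqFactor x t)⁻¹) ^ 3))) 0 := by
      fun_prop (disch := simp [levelSqFactor])
    simpa using this.tendsto
  refine squeeze_zero_norm' ?_
    (hbound.comp (tendsto_inv_atTop_nhdsGT_zero.mono_right nhdsWithin_le_nhds))
  filter_upwards [eventually_pos_levelSqFactor_inv x] with β ⟨hβ, hP⟩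
  have hmills := abs_mul_millsRatio_sub_millsPoly_le (hallLevel_pos hβ hP)
  rw [hallLevel_sq hβ hP, mul_inv] at hmills
  rw [← mul_assoc, norm_mul, norm_of_nonneg (by positivity), Real.norm_eq_abs]
  calc _ ≤ β ^ 2 * (exp ((x + 1) * β⁻¹) * levelSqFactor x β⁻¹ ^ (-(1 / 2) : ℝ)) *
        (15 * (β⁻¹ * (levelSqFactor x β⁻¹)⁻¹) ^ 3) := by gcongr
    _ = _ := by
        simp only [Function.comp_apply]
        field_simp

theorem tendsto_sq_mul_sqrt_mul_exp_mul_one_sub_stdNormalCDF_hallLevel_sub (x : ℝ) :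
    Tendsto (fun β : ℝ => β ^ 2 * (√(2 * π * β) * exp (β / 2) *
      (1 - stdNormalCDF (hallLevel x β)) - exp (-x))) atTop
      (𝓝 (exp (-x) * (x ^ 2 + 3 * x + 7 / 2))) := by
  have := ((tendsto_sq_mul_exp_mul_rpow_mul_millsPoly_sub_one x).add
    (tendsto_sq_mul_exp_mul_rpow_mul_millsRemainder x)).const_mul (exp (-x))
  rw [add_zero] at this
  refine this.congr' ?_
  filter_upwards [eventually_pos_levelSqFactor_inv x] with β ⟨hβ, hP⟩
  rw [sqrt_mul_exp_mul_one_sub_stdNormalCDF_hallLevel hβ hP]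
  ring

section Sequences

open Asymptotics

lemma isBigO_exp_sub_one_sub_self : (fun u => exp u - 1 - u) =O[𝓝 0] fun u => u ^ 2 := by
  refine .of_bound 1 ?_
  filter_upwards [Metric.closedBall_mem_nhds (0 : ℝ) one_pos] with u hu
  rw [Metric.mem_closedBall, dist_zero_right] at hu
  simpa using abs_exp_sub_one_sub_id_le hu

lemma isBigO_log_one_sub_add_self : (fun u => log (1 - u) + u) =O[𝓝 0] fun u => u ^ 2 := by
  refine .of_bound 2 ?_
  filter_upwards [Metric.closedBall_mem_nhds (0 : ℝ) one_half_pos] with u hu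
  rw [Metric.mem_closedBall, dist_zero_right, Real.norm_eq_abs] at hu
  have := abs_log_sub_add_sum_range_le (hu.trans_lt one_half_lt_one) 1
  simp only [Finset.range_one, Finset.sum_singleton, zero_add, pow_one, Nat.cast_zero,
    div_one] at this
  rw [norm_of_nonneg (sq_nonneg u), Real.norm_eq_abs]
  calc |log (1 - u) + u| ≤ |u| ^ 2 / (1 - |u|) := by rwa [add_comm]
    _ ≤ |u| ^ 2 / (1 / 2) := by gcongr; linarith
    _ = 2 * u ^ 2 := by rw [sq_abs]; ring

theorem tendsto_mul_comp_of_isBigO {ι : Type*} {l : Filter ι} {g : ℝ → ℝ}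
    (hg : g =O[𝓝 0] fun u => u ^ 2) {r u : ι → ℝ} (hu : Tendsto u l (𝓝 0))
    (hru : Tendsto (fun i => r i * u i ^ 2) l (𝓝 0)) :
    Tendsto (fun i => r i * g (u i)) l (𝓝 0) :=
  ((isBigO_refl r l).mul (hg.comp_tendsto hu)).trans_tendsto hru

theorem tendsto_of_tendsto_mul_sub {ι : Type*} {l : Filter ι} {r a : ι → ℝ} {y L : ℝ}
    (hr : Tendsto r l atTop) (h : Tendsto (fun i => r i * (a i - y)) l (𝓝 L)) :
    Tendsto a l (𝓝 y) := by
  have := (h.mul (tendsto_inv_atTop_zero.comp hr)).add_const y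
  rw [mul_zero, zero_add] at this
  refine this.congr' ?_
  filter_upwards [hr.eventually_gt_atTop 0] with i hi
  simp only [Function.comp_apply]
  field_simp
  ring

variable {r S : ℕ → ℝ} {y L : ℝ}

lemma tendsto_mul_pow_self (hr : ∀ᶠ n in atTop, 0 ≤ r n) (hS : Tendsto S atTop (𝓝 0))
    (hrS : Tendsto (fun n => r n * n * S n ^ 2) atTop (𝓝 0)) :
    Tendsto (fun n => r n * S n ^ n) atTop (𝓝 0) := by
  refine squeeze_zero_norm' ?_ hrS
  filter_upwards [eventually_ge_atTop 2, hr,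
    hS.eventually (Metric.closedBall_mem_nhds 0 one_pos)] with n hn hr0 hS1
  rw [dist_zero_right, Real.norm_eq_abs] at hS1
  rw [norm_mul, norm_pow, norm_of_nonneg hr0, Real.norm_eq_abs, ← sq_abs (S n)]
  calc r n * |S n| ^ n ≤ r n * |S n| ^ 2 :=
        mul_le_mul_of_nonneg_left (pow_le_pow_of_le_one (abs_nonneg _) hS1 hn) hr0
    _ ≤ r n * n * |S n| ^ 2 := by
        gcongr
        exact le_mul_of_one_le_right hr0 (by norm_cast; omega)

lemma tendsto_mul_one_sub_pow_sub_exp (hr : Tendsto r atTop atTop) (hS : Tendsto S atTop (𝓝 0))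
    (hrS : Tendsto (fun n => r n * n * S n ^ 2) atTop (𝓝 0))
    (hlim : Tendsto (fun n => r n * (n * S n - y)) atTop (𝓝 L)) :
    Tendsto (fun n => r n * ((1 - S n) ^ n - exp (-y))) atTop (𝓝 (-(exp (-y) * L))) := by
  set A : ℕ → ℝ := fun n => n * log (1 - S n)
  have hA : Tendsto (fun n => r n * (A n - -y)) atTop (𝓝 (-L)) := by
    have := (tendsto_mul_comp_of_isBigO isBigO_log_one_sub_add_self hS hrS).sub hlim
    rw [zero_sub] at this
    refine this.congr fun n => ?_
    simp only [A]
    ring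
  have hA0 := tendsto_sub_nhds_zero_iff.2 (tendsto_of_tendsto_mul_sub hr hA)
  have hexp := tendsto_mul_comp_of_isBigO isBigO_exp_sub_one_sub_self hA0
    (by simpa [pow_two, mul_assoc] using hA.mul hA0)
  have := ((hexp.add hA).const_mul (exp (-y)))
  rw [zero_add, mul_neg] at this
  refine this.congr' ?_
  filter_upwards [hS.eventually (gt_mem_nhds one_pos)] with n hn
  rw [← exp_log (sub_pos.2 hn), ← exp_nat_mul, sub_neg_eq_add, exp_add]
  have he : exp (-y) * exp y = 1 := by rw [← exp_add, neg_add_cancel, exp_zero]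
  linear_combination (r n * exp (A n)) * he

theorem tendsto_mul_one_sub_pow_sub_pow_sub_exp (hr : Tendsto r atTop atTop)
    (hrn : Tendsto (fun n => r n / n) atTop (𝓝 0))
    (hlim : Tendsto (fun n => r n * (n * S n - y)) atTop (𝓝 L)) :
    Tendsto (fun n => r n * ((1 - S n) ^ n - S n ^ n - exp (-y))) atTop
      (𝓝 (-(exp (-y) * L))) := by
  have hnS := tendsto_of_tendsto_mul_sub hr hlim
  have hS : Tendsto S atTop (𝓝 0) := by
    have := hnS.mul (tendsto_inv_atTop_zero.comp tendsto_natCast_atTop_atTop)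
    rw [mul_zero] at this
    refine this.congr' ?_
    filter_upwards [eventually_gt_atTop 0] with n hn
    simp only [Function.comp_apply]
    field_simp
  have hrS : Tendsto (fun n => r n * n * S n ^ 2) atTop (𝓝 0) := by
    have := hrn.mul (hnS.pow 2)
    rw [zero_mul] at this
    refine this.congr' ?_
    filter_upwards [eventually_gt_atTop 0] with n hn
    field_simp
  have := (tendsto_mul_one_sub_pow_sub_exp hr hS hrS hlim).sub
    (tendsto_mul_pow_self (hr.eventually_ge_atTop 0) hS hrS)
  rw [sub_zero] at this
  exact this.congr fun n => by ring

end Sequences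

lemma eq_sqrt_mul_exp_of_sq_eq {N β : ℝ} (hN : 0 ≤ N) (hβ : 0 ≤ β)
    (h : 2 * π * β * exp β = N ^ 2) : N = √(2 * π * β) * exp (β / 2) := by
  rw [← sqrt_sq hN, ← h, sqrt_mul (by positivity), exp_half]

lemma tendsto_atTop_of_mul_exp_eq_sq {β : ℕ → ℝ}
    (hβ : ∀ᶠ n in atTop, 2 * π * β n * exp (β n) = (n : ℝ) ^ 2) :
    Tendsto β atTop atTop := by
  refine tendsto_atTop.2 fun B => ?_
  have hsq : Tendsto (fun n : ℕ => (n : ℝ) ^ 2) atTop atTop :=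
    (tendsto_pow_atTop two_ne_zero).comp tendsto_natCast_atTop_atTop
  filter_upwards [hβ, hsq.eventually_gt_atTop (2 * π * max B 0 * exp (max B 0))]
    with n heq hlarge
  by_contra! hlt
  have hle : β n ≤ max B 0 := hlt.le.trans (le_max_left _ _)
  have : β n * exp (β n) ≤ max B 0 * exp (max B 0) :=
    mul_le_mul hle (exp_le_exp.2 hle) (exp_pos _).le (le_max_right _ _)
  rw [← heq] at hlarge
  nlinarith [pi_pos]

lemma tendsto_sq_div_sqrt_mul_exp :
    Tendsto (fun β : ℝ => β ^ 2 / (√(2 * π * β) * exp (β / 2))) atTop (𝓝 0) := by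
  have hlim : Tendsto (fun β : ℝ => 4 * ((β / 2) ^ 2 * exp (-(β / 2)))) atTop (𝓝 0) := by
    simpa using ((tendsto_pow_mul_exp_neg_atTop_nhds_zero 2).comp
      (tendsto_id.atTop_div_const (two_pos : (0 : ℝ) < 2))).const_mul 4
  refine squeeze_zero' ?_ ?_ hlim
  · filter_upwards [eventually_ge_atTop 0] with β hβ
    positivity
  · filter_upwards [eventually_ge_atTop 1] with β hβ
    have h1 : 1 ≤ √(2 * π * β) := one_le_sqrt.2 (by nlinarith [pi_gt_three])
    calc β ^ 2 / (√(2 * π * β) * exp (β / 2)) ≤ β ^ 2 / exp (β / 2) := by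
          gcongr
          exact le_mul_of_one_le_left (exp_pos _).le h1
      _ = 4 * ((β / 2) ^ 2 * exp (-(β / 2))) := by
          rw [exp_neg]
          field_simp
          ring

/-- Hall's first-order result, `t = 2`: With `b_n` the unique positive
solution of `2π b_n² exp(b_n²) = n²`, `c_n = 2 − 2b_n^{−2}`, `d_n = b_n² − 2b_n^{−2}`,
`h_n = (c_n x + d_n)^{1/2}` and `F_n(x) = Φ(h_n)^n − (1 − Φ(h_n))^n`:
`lim_{n→∞} b_n⁴ (F_n(x) − Λ(x)) = −Λ(x) e^{−x} (7/2 + 3x + x²)`. -/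
theorem powered_extremes_first_order_limit_t_eq_two
    (b : ℕ → ℝ)
    (hb : ∀ n : ℕ, 1 ≤ n → 0 < b n ∧
      2 * Real.pi * (b n) ^ 2 * Real.exp ((b n) ^ 2) = (n : ℝ) ^ 2)
    (x : ℝ)
    (c d h F : ℕ → ℝ)
    (hc : ∀ n : ℕ, c n = 2 - 2 / (b n) ^ 2)
    (hd : ∀ n : ℕ, d n = (b n) ^ 2 - 2 / (b n) ^ 2)
    (hh : ∀ n : ℕ, h n = (c n * x + d n) ^ ((1 : ℝ) / 2))
    (hF : ∀ n : ℕ, F n = stdNormalCDF (h n) ^ n - (1 - stdNormalCDF (h n)) ^ n) :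
    Tendsto (fun n : ℕ => (b n) ^ 4 * (F n - gumbel x)) atTop
      (𝓝 (-(gumbel x * Real.exp (-x) * (7 / 2 + 3 * x + x ^ 2)))) := by
  have hb' : ∀ᶠ n : ℕ in atTop, 2 * π * b n ^ 2 * exp (b n ^ 2) = (n : ℝ) ^ 2 := by
    filter_upwards [eventually_ge_atTop 1] with n hn using (hb n hn).2
  have hβ : Tendsto (fun n => b n ^ 2) atTop atTop := tendsto_atTop_of_mul_exp_eq_sq hb'
  have hn : ∀ᶠ n : ℕ in atTop, (n : ℝ) = √(2 * π * b n ^ 2) * exp (b n ^ 2 / 2) := by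
    filter_upwards [hb'] with n hn using eq_sqrt_mul_exp_of_sq_eq n.cast_nonneg (sq_nonneg _) hn
  have hlevel (n : ℕ) : h n = hallLevel x (b n ^ 2) := by
    rw [hh, hc, hd, ← sqrt_eq_rpow, hallLevel]
    ring_nf
  have hr : Tendsto (fun n => b n ^ 4) atTop atTop :=
    ((tendsto_pow_atTop two_ne_zero).comp hβ).congr fun n => by
      simp only [Function.comp_apply]
      ring
  have hrn : Tendsto (fun n => b n ^ 4 / n) atTop (𝓝 0) := by
    refine (tendsto_sq_div_sqrt_mul_exp.comp hβ).congr' ?_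
    filter_upwards [hn] with n hn
    simp only [Function.comp_apply, ← hn]
    ring
  have htail : Tendsto (fun n => b n ^ 4 * (n * (1 - stdNormalCDF (h n)) - exp (-x))) atTop
      (𝓝 (exp (-x) * (x ^ 2 + 3 * x + 7 / 2))) := by
    refine ((tendsto_sq_mul_sqrt_mul_exp_mul_one_sub_stdNormalCDF_hallLevel_sub x).comp hβ).congr' ?_
    filter_upwards [hn] with n hn
    simp only [Function.comp_apply, hlevel, ← hn]
    ring
  have := tendsto_mul_one_sub_pow_sub_pow_sub_exp hr hrn htail
  convert this using 2 with n
  · rw [hF, sub_sub_cancel, gumbel]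
  · rw [gumbel]
    ring
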